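/- Let (A,·) be an associative algebra and R : A → A a Rota-Baxter operator of weight 1, i.e., R(x)·R(y) + R(x·y) = R(R(x)·y + x·R(y)) for all x,y ∈ A. Then x * y = R(x)·y - y·R(x) - x·y defines a left-symmetric algebra structure on A. -/

import Mathlib

/-! The product is `x ∘ y = ⁅R x, y⁆ - x y`. Expanding both associators, everything cancels
except a commutator `⁅R (x ∘ y) - R (y ∘ x) - ⁅R x, R y⁆, z⁆`, and the Rota-Baxter identity,
applied to `(x, y)` and `(y, x)` and subtracted, says exactly that
`R (x ∘ y) - R (y ∘ x) = ⁅R x, R y⁆`. -/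

/-- The product x * y = R(x)·y - y·R(x) - x·y induced by a Rota-Baxter operator of weight 1. -/
def rbProd {F : Type*} [Field F] {A : Type*} [Ring A] [Algebra F A]
    (R : A →ₗ[F] A) (x y : A) : A :=
  R x * y - y * R x - x * y

section

variable {F : Type*} [Field F] {A : Type*} [Ring A] [Algebra F A] (R : A →ₗ[F] A)

theorem rbProd_leftSymmetry_defect (x y z : A) :
    (rbProd R (rbProd R x y) z - rbProd R x (rbProd R y z))
      - (rbProd R (rbProd R y x) z - rbProd R y (rbProd R x z))
      = (R (rbProd R x y) - R (rbProd R y x) - (R x * R y - R y * R x)) * z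
        - z * (R (rbProd R x y) - R (rbProd R y x) - (R x * R y - R y * R x)) := by
  simp only [rbProd]
  noncomm_ring

theorem map_rbProd_sub_map_rbProd
    (hR : ∀ x y : A, R x * R y + R (x * y) = R (R x * y + x * R y)) (x y : A) :
    R (rbProd R x y) - R (rbProd R y x) = R x * R y - R y * R x := by
  have hxy := hR x y
  have hyx := hR y x
  simp only [rbProd, map_sub, map_add] at hxy hyx ⊢
  linear_combination (norm := abel) hyx - hxy

end

theorem lsym_from_rota_baxter (F : Type*) [Field F] (A : Type*) [Ring A] [Algebra F A]
    (R : A →ₗ[F] A)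
    (hR : ∀ x y : A, R x * R y + R (x * y) = R (R x * y + x * R y)) :
    ∀ x y z : A,
      rbProd R (rbProd R x y) z - rbProd R x (rbProd R y z)
      = rbProd R (rbProd R y x) z - rbProd R y (rbProd R x z) := by
  intro x y z
  rw [← sub_eq_zero, rbProd_leftSymmetry_defect, map_rbProd_sub_map_rbProd R hR, sub_self,
    zero_mul, mul_zero, sub_self]
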